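/- arXiv:1612.09003 — 4 statements merged into one kernel-verified Lean document; each statement's English description precedes it below -/
import Mathlib

section
/- If two words over the positive integers are shift equivalent, then they are strongly Wilf equivalent. That is, if v can be obtained from u by a finite sequence of reversals and rigid shifts, then for all n, m, j ∈ ℕ the number of words w with |w| = n, ‖w‖ = m, and η_u(w) = j equals the number of words w with |w| = n, ‖w‖ = m, and η_v(w) = j. -/
/-- The `n`-th letter (1-indexed) of a word `u`, with the convention that
letters outside the range `{1, …, |u|}` are `0`. -/
def letter (u : List ℕ) (n : ℤ) : ℕ :=
  if 1 ≤ n then u.getD (n - 1).toNat 0 else 0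

/-- A word over the positive integers: every letter is positive. -/
def IsWord (w : List ℕ) : Prop := ∀ x ∈ w, 0 < x

/-- `u` embeds in `w` at (1-indexed) position `i`:
`1 ≤ i ≤ |w| - |u| + 1` and `u_j ≤ w_{i+j-1}` for all `1 ≤ j ≤ |u|`. -/
def EmbedsAt (u w : List ℕ) (i : ℕ) : Prop :=
  1 ≤ i ∧ i + u.length ≤ w.length + 1 ∧
    ∀ j ∈ Finset.Icc 1 u.length, letter u (j : ℤ) ≤ letter w ((i : ℤ) + (j : ℤ) - 1)

instance (u w : List ℕ) : DecidablePred (EmbedsAt u w) := fun i => by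
  unfold EmbedsAt; infer_instance

/-- `η_u(w)`: the number of positions at which `u` embeds in `w`. -/
def eta (u w : List ℕ) : ℕ :=
  ((Finset.Icc 1 (w.length + 1 - u.length)).filter (EmbedsAt u w)).card

/-- Strong Wilf equivalence: for all `n m j`, the number of words of length `n`,
sum `m`, and exactly `j` embeddings of `u` equals that for `v`. -/
def StronglyWilfEquiv (u v : List ℕ) : Prop :=
  ∀ n m j : ℕ,
    {w : List ℕ | IsWord w ∧ w.length = n ∧ w.sum = m ∧ eta u w = j}.ncard =
    {w : List ℕ | IsWord w ∧ w.length = n ∧ w.sum = m ∧ eta v w = j}.ncard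

/-- `w` avoids `u`: there is no position at which `u` embeds in `w`. -/
def Avoids (u w : List ℕ) : Prop := ∀ i : ℕ, ¬ EmbedsAt u w i

/-- Wilf equivalence: for all `n m`, the number of words of length `n` and
sum `m` avoiding `u` equals that for `v`. -/
def WilfEquiv (u v : List ℕ) : Prop :=
  ∀ n m : ℕ,
    {w : List ℕ | IsWord w ∧ w.length = n ∧ w.sum = m ∧ Avoids u w}.ncard =
    {w : List ℕ | IsWord w ∧ w.length = n ∧ w.sum = m ∧ Avoids v w}.ncard

/-- `v` is the rigid shift of `u` at height `h ≥ 1` by the integer `k`. -/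
def IsRigidShift (u v : List ℕ) (h : ℕ) (k : ℤ) : Prop :=
  1 ≤ h ∧ v.length = u.length ∧
  (∀ n : ℤ, h < letter u n → 1 ≤ n + k ∧ n + k ≤ (u.length : ℤ) ∧ h ≤ letter u (n + k)) ∧
  (∀ n : ℤ, 1 ≤ n → n ≤ (v.length : ℤ) →
    letter v n = min h (letter u n) + (letter u (n - k) - h))

/-- Shift equivalence: the smallest equivalence relation relating every word to
its reversal and to each of its rigid shifts. -/
def ShiftEquiv (u v : List ℕ) : Prop :=
  Relation.EqvGen (fun a b => b = a.reverse ∨ ∃ (h : ℕ) (k : ℤ), IsRigidShift a b h k) u v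

lemma letter_of_nonpos (u : List ℕ) {n : ℤ} (h : n ≤ 0) : letter u n = 0 := by
  unfold letter; rw [if_neg]; omega

lemma letter_of_gt (u : List ℕ) {n : ℤ} (h : (u.length : ℤ) < n) : letter u n = 0 := by
  unfold letter
  split
  · apply List.getD_eq_default
    omega
  · rfl

lemma letter_mem_range {u : List ℕ} {n : ℤ} (h : letter u n ≠ 0) :
    1 ≤ n ∧ n ≤ (u.length : ℤ) := by
  constructor
  · by_contra hc; exact h (letter_of_nonpos u (by omega))
  · by_contra hc; exact h (letter_of_gt u (by omega))

lemma letter_natCast (u : List ℕ) (j : ℕ) : letter u ((j : ℤ) + 1) = u.getD j 0 := by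
  unfold letter
  rw [if_pos (by omega)]
  congr 1
  omega

lemma letter_mem {u : List ℕ} {n : ℤ} (h1 : 1 ≤ n) (h2 : n ≤ (u.length : ℤ)) :
    letter u n ∈ u := by
  unfold letter
  rw [if_pos h1, List.getD_eq_getElem u 0 (by omega)]
  exact List.getElem_mem _

lemma letter_cons_shift (a : ℕ) (t : List ℕ) {x : ℤ} (hx : 1 ≤ x) :
    letter (a :: t) (x + 1) = letter t x := by
  unfold letter
  rw [if_pos (by omega), if_pos (by omega),
    show (x + 1 - 1).toNat = (x - 1).toNat + 1 by omega]
  exact List.getD_cons_succ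

lemma sum_letter (w : List ℕ) :
    ∑ m ∈ Finset.Icc (1:ℤ) (w.length : ℤ), letter w m = w.sum := by
  have h : ∀ n : ℕ, ∀ w : List ℕ, w.length = n →
      ∑ m ∈ Finset.Icc (1:ℤ) (w.length : ℤ), letter w m = w.sum := by
    intro n
    induction n with
    | zero => intro w hw; rw [List.length_eq_zero_iff.mp hw]; simp
    | succ n ih =>
      intro w hw
      rcases List.exists_of_length_succ w hw with ⟨a, t, rfl⟩
      have ht : t.length = n := by simpa using hw
      have hins : Finset.Icc (1:ℤ) ((a :: t).length : ℤ) =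
          insert (1:ℤ) (Finset.map ⟨fun x => x + 1, add_left_injective 1⟩
            (Finset.Icc (1:ℤ) (t.length : ℤ))) := by
        ext x
        simp only [Finset.mem_insert, Finset.mem_map, Finset.mem_Icc,
          Function.Embedding.coeFn_mk, List.length_cons]
        push_cast
        constructor
        · rintro ⟨h1, h2⟩
          by_cases hx : x = 1
          · left; exact hx
          · right; exact ⟨x - 1, ⟨by omega, by omega⟩, by ring⟩
        · rintro (rfl | ⟨y, ⟨hy1, hy2⟩, rfl⟩) <;> omega
      rw [hins, Finset.sum_insert (by simp), Finset.sum_map]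
      simp only [Function.Embedding.coeFn_mk]
      have hl1 : letter (a :: t) 1 = a := by
        have := letter_natCast (a :: t) 0; simpa using this
      rw [Finset.sum_congr rfl (fun x hx => letter_cons_shift a t
        (by simp only [Finset.mem_Icc] at hx; omega)), ih t ht, hl1, List.sum_cons]
  exact h w.length w rfl

instance : DecidablePred IsWord := fun w => by unfold IsWord; infer_instance

/-- The finset of all words of length `n` and sum `m`. -/
def WFinset (n m : ℕ) : Finset (List ℕ) :=
  ((Finset.univ : Finset (Fin n → Fin (m+1))).image
    (fun f => (List.ofFn fun i => (f i : ℕ)))).filter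
    (fun w => IsWord w ∧ w.sum = m)

lemma mem_WFinset {n m : ℕ} {w : List ℕ} :
    w ∈ WFinset n m ↔ IsWord w ∧ w.length = n ∧ w.sum = m := by
  unfold WFinset
  rw [Finset.mem_filter, Finset.mem_image]
  constructor
  · rintro ⟨⟨f, _, rfl⟩, hw, hs⟩
    exact ⟨hw, by simp, hs⟩
  · rintro ⟨hw, hl, hs⟩
    refine ⟨⟨fun i => ⟨w.getD i 0, ?_⟩, Finset.mem_univ _, ?_⟩, hw, hs⟩
    · have : w.getD i 0 ∈ w := by
        rw [List.getD_eq_getElem w 0 (by omega)]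
        exact List.getElem_mem _
      have := List.single_le_sum (fun x _ => Nat.zero_le x) _ this
      omega
    · apply List.ext_getElem (by simp [hl])
      intro i h1 h2
      simp only [List.getElem_ofFn]
      rw [List.getD_eq_getElem w 0 (by simpa using h2)]

lemma set_eq_WFilter (n m : ℕ) (Q : List ℕ → Prop) [DecidablePred Q] :
    {w : List ℕ | IsWord w ∧ w.length = n ∧ w.sum = m ∧ Q w} =
      ↑((WFinset n m).filter Q) := by
  ext w
  simp only [Set.mem_setOf_eq, Finset.coe_filter, mem_WFinset]
  tauto

lemma ncard_eq_card_WFilter (n m : ℕ) (Q : List ℕ → Prop) [DecidablePred Q] :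
    {w : List ℕ | IsWord w ∧ w.length = n ∧ w.sum = m ∧ Q w}.ncard =
      ((WFinset n m).filter Q).card := by
  rw [set_eq_WFilter, Set.ncard_coe_finset]

lemma letter_reverse (u : List ℕ) (j : ℤ) :
    letter u.reverse j = letter u ((u.length : ℤ) + 1 - j) := by
  rcases le_or_gt j 0 with h | h
  · rw [letter_of_nonpos _ h, letter_of_gt u (by omega)]
  rcases le_or_gt j (u.length : ℤ) with h2 | h2
  · unfold letter
    rw [if_pos (by omega), if_pos (by omega)]
    rw [List.getD_eq_getElem u.reverse 0 (by simp; omega),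
      List.getD_eq_getElem u 0 (by omega)]
    rw [List.getElem_reverse]
    congr 1
    omega
  · rw [letter_of_gt u.reverse (by simp; omega), letter_of_nonpos u (by omega)]

lemma embedsAt_reverse {u w : List ℕ} {i : ℕ} (h : EmbedsAt u w i) :
    EmbedsAt u.reverse w.reverse (w.length + 2 - (u.length + i)) := by
  obtain ⟨h1, h2, h3⟩ := h
  refine ⟨by omega, by simp; omega, ?_⟩
  intro j hj
  simp only [Finset.mem_Icc, List.length_reverse] at hj
  rw [letter_reverse, letter_reverse]
  have e1 : ((u.length : ℤ) + 1 - j) ∈ Finset.Icc (1:ℤ) (u.length : ℤ) := by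
    simp only [Finset.mem_Icc]; omega
  have key := h3 ((u.length + 1 - j : ℕ)) (by simp only [Finset.mem_Icc]; omega)
  have ecast : ((u.length + 1 - j : ℕ) : ℤ) = (u.length : ℤ) + 1 - (j : ℤ) := by
    push_cast [Nat.cast_sub (by omega : j ≤ u.length + 1)]; ring
  rw [ecast] at key
  have ecast2 : (w.length : ℤ) + 1 - (((w.length + 2 - (u.length + i) : ℕ) : ℤ) + (j:ℤ) - 1)
      = (i : ℤ) + ((u.length : ℤ) + 1 - (j:ℤ)) - 1 := by
    have : ((w.length + 2 - (u.length + i) : ℕ) : ℤ) = (w.length:ℤ) + 2 - ((u.length:ℤ) + i) := by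
      push_cast [Nat.cast_sub (by omega : u.length + i ≤ w.length + 2)]; ring
    rw [this]; ring
  rw [ecast2]
  exact key

lemma embedsAt_iff_mem_filter {u w : List ℕ} {i : ℕ} :
    i ∈ (Finset.Icc 1 (w.length + 1 - u.length)).filter (EmbedsAt u w) ↔ EmbedsAt u w i := by
  rw [Finset.mem_filter, Finset.mem_Icc]
  constructor
  · tauto
  · intro h
    exact ⟨⟨h.1, by have := h.2.1; omega⟩, h⟩

lemma eta_reverse (u w : List ℕ) : eta u w = eta u.reverse w.reverse := by
  unfold eta
  apply Finset.card_bij' (fun i _ => w.length + 2 - (u.length + i))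
    (fun i _ => w.length + 2 - (u.length + i))
  · intro i hi
    rw [embedsAt_iff_mem_filter] at hi ⊢
    exact embedsAt_reverse hi
  · intro i hi
    rw [embedsAt_iff_mem_filter] at hi ⊢
    have := embedsAt_reverse hi
    simpa using this
  · intro i hi
    rw [embedsAt_iff_mem_filter] at hi
    have := hi.2.1
    omega
  · intro i hi
    rw [embedsAt_iff_mem_filter] at hi
    have := hi.2.1
    simp only [List.length_reverse] at this
    omega

/-- reindex an `Icc` sum over `ℤ` to a `range` sum. -/
lemma sum_Icc_int (g : ℤ → ℕ) (n : ℕ) :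
    ∑ x ∈ Finset.Icc (1:ℤ) (n:ℤ), g x = ∑ j ∈ Finset.range n, g ((j:ℤ)+1) := by
  apply Finset.sum_nbij' (fun (x:ℤ) => (x-1).toNat) (fun (j:ℕ) => (j:ℤ)+1)
  · intro x hx; simp only [Finset.mem_Icc] at hx; simp only [Finset.mem_range]; omega
  · intro j hj; simp only [Finset.mem_range] at hj; simp only [Finset.mem_Icc]; omega
  · intro x hx; simp only [Finset.mem_Icc] at hx; omega
  · intro j hj; simp only [Finset.mem_range] at hj; omega
  · intro x hx; simp only [Finset.mem_Icc] at hx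
    congr 1; omega

lemma sum_getD (w : List ℕ) : ∑ j ∈ Finset.range w.length, w.getD j 0 = w.sum := by
  rw [← sum_letter w, sum_Icc_int]
  exact Finset.sum_congr rfl fun j _ => (letter_natCast w j).symm

/-- `bnd l i` : effective lower bound (incorporating positivity) at 0-indexed `i`. -/
def bnd (l : ℤ → ℕ) (i : ℕ) : ℕ := max 1 (l ((i:ℤ)+1))

lemma mem_filter_bnd {n m : ℕ} {l : ℤ → ℕ} {w : List ℕ} :
    (w ∈ (WFinset n m).filter
      (fun w => ∀ x ∈ Finset.Icc (1:ℤ) (n:ℤ), l x ≤ letter w x)) ↔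
    (w.length = n ∧ w.sum = m ∧ ∀ i < n, bnd l i ≤ w.getD i 0) := by
  rw [Finset.mem_filter, mem_WFinset]
  constructor
  · rintro ⟨⟨hw, hlen, hsum⟩, hcond⟩
    refine ⟨hlen, hsum, fun i hi => ?_⟩
    have h1 : 0 < w.getD i 0 := by
      apply hw
      rw [List.getD_eq_getElem w 0 (by omega)]
      exact List.getElem_mem _
    have h2 : l ((i:ℤ)+1) ≤ w.getD i 0 := by
      rw [← letter_natCast]
      exact hcond _ (by simp only [Finset.mem_Icc]; omega)
    simp only [bnd]; omega
  · rintro ⟨hlen, hsum, hbnd⟩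
    have hw : IsWord w := by
      intro x hx
      rcases List.mem_iff_getElem.mp hx with ⟨i, hi, rfl⟩
      have := hbnd i (by omega)
      rw [List.getD_eq_getElem w 0 hi] at this
      simp only [bnd] at this; omega
    refine ⟨⟨hw, hlen, hsum⟩, fun x hx => ?_⟩
    simp only [Finset.mem_Icc] at hx
    have hi : ((x-1).toNat : ℤ) + 1 = x := by omega
    have := hbnd (x-1).toNat (by omega)
    rw [← letter_natCast w, hi] at this
    simp only [bnd, hi] at this
    omega

lemma count_congr (n m : ℕ) (l1 l2 : ℤ → ℕ)
    (hsum : ∑ x ∈ Finset.Icc (1:ℤ) (n:ℤ), max 1 (l1 x) =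
      ∑ x ∈ Finset.Icc (1:ℤ) (n:ℤ), max 1 (l2 x)) :
    ((WFinset n m).filter (fun w => ∀ x ∈ Finset.Icc (1:ℤ) (n:ℤ), l1 x ≤ letter w x)).card =
    ((WFinset n m).filter (fun w => ∀ x ∈ Finset.Icc (1:ℤ) (n:ℤ), l2 x ≤ letter w x)).card := by
  have hsum' : ∑ j ∈ Finset.range n, bnd l1 j = ∑ j ∈ Finset.range n, bnd l2 j :=
    ((sum_Icc_int (fun x => max 1 (l1 x)) n).symm.trans hsum).trans
      (sum_Icc_int (fun x => max 1 (l2 x)) n)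
  -- the transfer map
  have key : ∀ (l1 l2 : ℤ → ℕ),
      (∑ j ∈ Finset.range n, bnd l1 j = ∑ j ∈ Finset.range n, bnd l2 j) →
      ∀ w : List ℕ, (w.length = n ∧ w.sum = m ∧ ∀ i < n, bnd l1 i ≤ w.getD i 0) →
      (((List.ofFn (fun i : Fin n => w.getD i 0 - bnd l1 i + bnd l2 i)).length = n ∧
        (List.ofFn (fun i : Fin n => w.getD i 0 - bnd l1 i + bnd l2 i)).sum = m ∧
        ∀ i < n, bnd l2 i ≤ (List.ofFn (fun i : Fin n => w.getD i 0 - bnd l1 i + bnd l2 i)).getD i 0)) := by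
    intro l1 l2 hs w ⟨hlen, hsm, hb⟩
    have hget : ∀ i < n, (List.ofFn (fun i : Fin n => w.getD i 0 - bnd l1 i + bnd l2 i)).getD i 0
        = w.getD i 0 - bnd l1 i + bnd l2 i := by
      intro i hi
      rw [List.getD_eq_getElem _ 0 (by simp [hi]), List.getElem_ofFn]
    refine ⟨by simp, ?_, fun i hi => by rw [hget i hi]; omega⟩
    rw [← sum_getD, List.length_ofFn]
    rw [Finset.sum_congr rfl (fun i hi => hget i (Finset.mem_range.mp hi))]
    have e1 : ∑ i ∈ Finset.range n, (w.getD i 0 - bnd l1 i + bnd l2 i) =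
        (∑ i ∈ Finset.range n, (w.getD i 0 - bnd l1 i)) + ∑ i ∈ Finset.range n, bnd l2 i := by
      rw [Finset.sum_add_distrib]
    have e2 : ∑ i ∈ Finset.range n, w.getD i 0 =
        (∑ i ∈ Finset.range n, (w.getD i 0 - bnd l1 i)) + ∑ i ∈ Finset.range n, bnd l1 i := by
      rw [← Finset.sum_add_distrib]
      apply Finset.sum_congr rfl
      intro i hi
      have := hb i (Finset.mem_range.mp hi)
      omega
    have e3 : ∑ i ∈ Finset.range n, w.getD i 0 = m := by
      rw [← hlen, sum_getD, hsm]
    omega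
  apply Finset.card_bij'
    (fun w _ => List.ofFn (fun i : Fin n => w.getD i 0 - bnd l1 i + bnd l2 i))
    (fun w _ => List.ofFn (fun i : Fin n => w.getD i 0 - bnd l2 i + bnd l1 i))
  · intro w hw
    rw [mem_filter_bnd] at hw ⊢
    exact key l1 l2 hsum' w hw
  · intro w hw
    rw [mem_filter_bnd] at hw ⊢
    exact key l2 l1 hsum'.symm w hw
  · intro w hw
    rw [mem_filter_bnd] at hw
    obtain ⟨hlen, hsm, hb⟩ := hw
    apply List.ext_getElem (by simp [hlen])
    intro i h1 h2
    simp only [List.getElem_ofFn]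
    have hi : i < n := by simpa [hlen] using h2
    have hget : (List.ofFn (fun i : Fin n => w.getD i 0 - bnd l1 i + bnd l2 i)).getD i 0
        = w.getD i 0 - bnd l1 i + bnd l2 i := by
      rw [List.getD_eq_getElem _ 0 (by simp [hi]), List.getElem_ofFn]
    rw [hget]
    have := hb i hi
    rw [List.getD_eq_getElem w 0 (by omega)]
    rw [List.getD_eq_getElem w 0 (by omega)] at this
    omega
  · intro w hw
    rw [mem_filter_bnd] at hw
    obtain ⟨hlen, hsm, hb⟩ := hw
    apply List.ext_getElem (by simp [hlen])
    intro i h1 h2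
    simp only [List.getElem_ofFn]
    have hi : i < n := by simpa [hlen] using h2
    have hget : (List.ofFn (fun i : Fin n => w.getD i 0 - bnd l2 i + bnd l1 i)).getD i 0
        = w.getD i 0 - bnd l2 i + bnd l1 i := by
      rw [List.getD_eq_getElem _ 0 (by simp [hi]), List.getElem_ofFn]
    rw [hget]
    have := hb i hi
    rw [List.getD_eq_getElem w 0 (by omega)]
    rw [List.getD_eq_getElem w 0 (by omega)] at this
    omega
section RigidShift
variable {u v : List ℕ} {h : ℕ} {k : ℤ}

/-- F1: rigid shifts preserve the "base" part of every letter. -/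
lemma rigid_min_eq (hrs : IsRigidShift u v h k) (n : ℤ) :
    min h (letter v n) = min h (letter u n) := by
  obtain ⟨hh, hlen, hi, hii⟩ := hrs
  rcases le_or_gt n 0 with hn | hn
  · rw [letter_of_nonpos u hn, letter_of_nonpos v hn]
  rcases le_or_gt n (u.length : ℤ) with hn2 | hn2
  · have hv := hii n (by omega) (by omega)
    rcases le_or_gt (letter u (n - k)) h with hc | hc
    · omega
    · have := (hi (n - k) hc).2.2
      simp only [sub_add_cancel] at this
      omega
  · rw [letter_of_gt u hn2, letter_of_gt v (by omega)]

/-- F2: rigid shifts shift the "top" part of every letter by `k`. -/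
lemma rigid_top_eq (hrs : IsRigidShift u v h k) (n : ℤ) :
    letter v n - h = letter u (n - k) - h := by
  obtain ⟨hh, hlen, hi, hii⟩ := hrs
  rcases le_or_gt n 0 with hn | hn
  · rw [letter_of_nonpos v hn]
    rcases le_or_gt (letter u (n - k)) h with hc | hc
    · omega
    · have := (hi (n - k) hc).1
      omega
  rcases le_or_gt n (u.length : ℤ) with hn2 | hn2
  · have hv := hii n (by omega) (by omega)
    rcases le_or_gt (letter u (n - k)) h with hc | hc
    · omega
    · have := (hi (n - k) hc).2.2
      simp only [sub_add_cancel] at this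
      omega
  · rw [letter_of_gt v (by omega)]
    rcases le_or_gt (letter u (n - k)) h with hc | hc
    · omega
    · have := (hi (n - k) hc).2.1
      omega

/-- The pointwise lower-bound profile imposed by marking all positions in `S`. -/
def lbF (u : List ℕ) (S : Finset ℕ) (x : ℤ) : ℕ := S.sup fun i => letter u (x - i + 1)

/-- P1: decomposition of the effective lower bound into base and top parts. -/
lemma max_lbF_decomp (z : List ℕ) (S : Finset ℕ) (x : ℤ) (hh : 1 ≤ h) :
    max 1 (lbF z S x) =
      max 1 (S.sup fun i => min h (letter z (x - i + 1))) +
        S.sup (fun i => letter z (x - i + 1) - h) := by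
  rcases Nat.eq_zero_or_pos (S.sup (fun i => letter z (x - i + 1) - h)) with hE0 | hEpos
  · have hall : ∀ i ∈ S, letter z (x - i + 1) ≤ h := fun i hi => by
      have h2 := (Finset.sup_eq_bot_iff (fun i : ℕ => letter z (x - i + 1) - h) S).mp hE0 i hi
      simp only [Nat.bot_eq_zero] at h2
      omega
    have h3 : lbF z S x = S.sup fun i => min h (letter z (x - i + 1)) := by
      apply Finset.sup_congr rfl; intro i hi; have := hall i hi; omega
    rw [h3, hE0, add_zero]
  · have hne : S.Nonempty := by
      by_contra hne
      rw [Finset.not_nonempty_iff_eq_empty] at hne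
      subst hne; simp at hEpos
    obtain ⟨i0, hi0S, hi0⟩ := Finset.exists_mem_eq_sup S hne
      (fun i => letter z (x - i + 1) - h)
    have hCle : (S.sup fun i => min h (letter z (x - i + 1))) ≤ h :=
      Finset.sup_le (fun i _ => min_le_left _ _)
    have hCge : min h (letter z (x - i0 + 1)) ≤
        S.sup fun i => min h (letter z (x - i + 1)) :=
      Finset.le_sup (f := fun i : ℕ => min h (letter z (x - i + 1))) hi0S
    have hlble : lbF z S x ≤ h + S.sup (fun i => letter z (x - i + 1) - h) := by
      apply Finset.sup_le
      intro i hi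
      have h5 : letter z (x - i + 1) - h ≤ S.sup (fun i => letter z (x - i + 1) - h) :=
        Finset.le_sup (f := fun i : ℕ => letter z (x - i + 1) - h) hi
      omega
    have hlbge : letter z (x - i0 + 1) ≤ lbF z S x :=
      Finset.le_sup (f := fun i => letter z (x - (i : ℕ) + 1)) hi0S
    omega

/-- Two sums of a function agree on any two finsets containing its support. -/
lemma sum_eq_of_support_subset (g : ℤ → ℕ) (A B : Finset ℤ)
    (hg : ∀ x, g x ≠ 0 → x ∈ A ∧ x ∈ B) : ∑ x ∈ A, g x = ∑ x ∈ B, g x := by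
  classical
  have h1 : ∑ x ∈ A, g x = ∑ x ∈ A ∩ B, g x := by
    apply (Finset.sum_subset (Finset.inter_subset_left) _).symm
    intro x hx hx2
    by_contra hc
    exact hx2 (Finset.mem_inter.mpr ⟨hx, (hg x hc).2⟩)
  have h2 : ∑ x ∈ B, g x = ∑ x ∈ A ∩ B, g x := by
    apply (Finset.sum_subset (Finset.inter_subset_right) _).symm
    intro x hx hx2
    by_contra hc
    exact hx2 (Finset.mem_inter.mpr ⟨(hg x hc).1, hx⟩)
  rw [h1, h2]

/-- THE core combinatorial lemma: a rigid shift does not change the total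
of the effective lower-bound profile of any marking `S`. -/
lemma sum_max_lbF_eq (hrs : IsRigidShift u v h k) {n : ℕ} (S : Finset ℕ)
    (hS : S ⊆ Finset.Icc 1 (n + 1 - u.length)) :
    ∑ x ∈ Finset.Icc (1:ℤ) (n:ℤ), max 1 (lbF u S x) =
      ∑ x ∈ Finset.Icc (1:ℤ) (n:ℤ), max 1 (lbF v S x) := by
  have hh : 1 ≤ h := hrs.1
  have hSb : ∀ i ∈ S, 1 ≤ i ∧ i + u.length ≤ n + 1 := by
    intro i hi
    have := Finset.mem_Icc.mp (hS hi)
    omega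
  -- rewrite both sides via the decomposition
  have hu1 : ∀ x, max 1 (lbF u S x) =
      max 1 (S.sup fun i => min h (letter u (x - i + 1))) +
        S.sup (fun i => letter u (x - i + 1) - h) := fun x => max_lbF_decomp u S x hh
  have hv1 : ∀ x, max 1 (lbF v S x) =
      max 1 (S.sup fun i => min h (letter u (x - i + 1))) +
        S.sup (fun i => letter u ((x - k) - i + 1) - h) := by
    intro x
    rw [max_lbF_decomp v S x hh]
    congr 2
    · apply Finset.sup_congr rfl
      intro i hi
      exact rigid_min_eq hrs _
    · funext i
      rw [rigid_top_eq hrs]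
      congr 1
      ring
  set E : ℤ → ℕ := fun x => S.sup (fun i => letter u (x - i + 1) - h) with hEdef
  -- support of E
  have hsupp : ∀ x, E x ≠ 0 → (1 ≤ x ∧ x ≤ n) ∧ (1 ≤ x + k ∧ x + k ≤ n) := by
    intro x hx
    have : ∃ i ∈ S, letter u (x - i + 1) - h ≠ 0 := by
      by_contra hc
      push_neg at hc
      exact hx ((Finset.sup_eq_bot_iff _ S).mpr hc)
    obtain ⟨i, hiS, hine⟩ := this
    have hgt : h < letter u (x - i + 1) := by omega
    have hrange := letter_mem_range (by omega : letter u (x - i + 1) ≠ 0)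
    have hik := (hrs.2.2.1 (x - i + 1) hgt)
    have hb := hSb i hiS
    constructor <;> constructor <;> omega
  calc ∑ x ∈ Finset.Icc (1:ℤ) (n:ℤ), max 1 (lbF u S x)
      = ∑ x ∈ Finset.Icc (1:ℤ) (n:ℤ),
          (max 1 (S.sup fun i => min h (letter u (x - i + 1))) + E x) := by
        exact Finset.sum_congr rfl fun x _ => hu1 x
    _ = ∑ x ∈ Finset.Icc (1:ℤ) (n:ℤ),
          max 1 (S.sup fun i => min h (letter u (x - i + 1))) +
        ∑ x ∈ Finset.Icc (1:ℤ) (n:ℤ), E x := Finset.sum_add_distrib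
    _ = ∑ x ∈ Finset.Icc (1:ℤ) (n:ℤ),
          max 1 (S.sup fun i => min h (letter u (x - i + 1))) +
        ∑ x ∈ Finset.Icc (1:ℤ) (n:ℤ), E (x - k) := by
        congr 1
        have hmap : ∑ x ∈ Finset.Icc (1:ℤ) (n:ℤ), E (x - k) =
            ∑ x ∈ Finset.Icc (1 - k) ((n:ℤ) - k), E x := by
          rw [show Finset.Icc (1:ℤ) (n:ℤ) = Finset.Icc (1 - k + k) ((n:ℤ) - k + k) by
              congr 1 <;> omega, ← Finset.map_add_right_Icc, Finset.sum_map]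
          apply Finset.sum_congr rfl
          intro x _
          simp [addRightEmbedding]
        rw [hmap]
        apply sum_eq_of_support_subset
        intro x hx
        have := hsupp x hx
        constructor <;> simp only [Finset.mem_Icc] <;> omega
    _ = ∑ x ∈ Finset.Icc (1:ℤ) (n:ℤ), max 1 (lbF v S x) := by
        rw [← Finset.sum_add_distrib]
        exact (Finset.sum_congr rfl fun x _ => (hv1 x).symm)
end RigidShift

lemma embeds_all_iff {u w : List ℕ} {S : Finset ℕ}
    (hS : S ⊆ Finset.Icc 1 (w.length + 1 - u.length)) :
    (∀ i ∈ S, EmbedsAt u w i) ↔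
      ∀ x ∈ Finset.Icc (1:ℤ) (w.length : ℤ), lbF u S x ≤ letter w x := by
  have hSb : ∀ i ∈ S, 1 ≤ i ∧ i + u.length ≤ w.length + 1 := by
    intro i hi
    have := Finset.mem_Icc.mp (hS hi)
    omega
  constructor
  · intro hemb x hx
    rw [Finset.mem_Icc] at hx
    apply Finset.sup_le
    intro i hi
    rcases Nat.eq_zero_or_pos (letter u (x - i + 1)) with h0 | hpos
    · rw [h0]; exact Nat.zero_le _
    have hrange := letter_mem_range (by omega : letter u (x - i + 1) ≠ 0)
    have h3 := (hemb i hi).2.2 (x - i + 1).toNat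
      (by rw [Finset.mem_Icc]; omega)
    have e1 : (((x - i + 1).toNat : ℤ)) = x - i + 1 := by omega
    rw [e1] at h3
    have e2 : (i : ℤ) + (x - i + 1) - 1 = x := by ring
    rw [e2] at h3
    exact h3
  · intro hlb i hi
    have hb := hSb i hi
    refine ⟨hb.1, hb.2, ?_⟩
    intro j hj
    rw [Finset.mem_Icc] at hj
    have hx : ((i : ℤ) + j - 1) ∈ Finset.Icc (1:ℤ) (w.length : ℤ) := by
      rw [Finset.mem_Icc]; omega
    refine le_trans ?_ (hlb _ hx)
    have e1 : ((i : ℤ) + j - 1) - i + 1 = (j : ℤ) := by ring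
    calc letter u (j:ℤ) = letter u (((i : ℤ) + j - 1) - i + 1) := by rw [e1]
      _ ≤ lbF u S ((i : ℤ) + j - 1) :=
          Finset.le_sup (f := fun i' : ℕ => letter u (((i : ℤ) + j - 1) - i' + 1)) hi

/-! ### Counting words with marked occurrences -/

def AA (u : List ℕ) (n m j : ℕ) : ℕ :=
  ((WFinset n m).filter (fun w => eta u w = j)).card

def BB (u : List ℕ) (n m s : ℕ) : ℕ :=
  ∑ w ∈ WFinset n m, (eta u w).choose s

lemma countS_congr {u v : List ℕ} {h : ℕ} {k : ℤ} (hrs : IsRigidShift u v h k)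
    (n m : ℕ) (S : Finset ℕ) (hS : S ⊆ Finset.Icc 1 (n + 1 - u.length)) :
    ((WFinset n m).filter (fun w => ∀ i ∈ S, EmbedsAt u w i)).card =
      ((WFinset n m).filter (fun w => ∀ i ∈ S, EmbedsAt v w i)).card := by
  have hlenv : v.length = u.length := hrs.2.1
  have h1 : ∀ w ∈ WFinset n m,
      ((∀ i ∈ S, EmbedsAt u w i) ↔ ∀ x ∈ Finset.Icc (1:ℤ) (n:ℤ), lbF u S x ≤ letter w x) := by
    intro w hw
    have hlen : w.length = n := (mem_WFinset.mp hw).2.1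
    rw [← hlen]
    exact embeds_all_iff (by rw [hlen]; exact hS)
  have h2 : ∀ w ∈ WFinset n m,
      ((∀ i ∈ S, EmbedsAt v w i) ↔ ∀ x ∈ Finset.Icc (1:ℤ) (n:ℤ), lbF v S x ≤ letter w x) := by
    intro w hw
    have hlen : w.length = n := (mem_WFinset.mp hw).2.1
    rw [← hlen]
    exact embeds_all_iff (by rw [hlen, hlenv]; exact hS)
  rw [Finset.filter_congr h1, Finset.filter_congr h2]
  exact count_congr n m (lbF u S) (lbF v S) (sum_max_lbF_eq hrs S hS)

lemma eta_le {u w : List ℕ} {n m : ℕ} (hw : w ∈ WFinset n m) : eta u w ≤ n + 1 := by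
  have hlen : w.length = n := (mem_WFinset.mp hw).2.1
  unfold eta
  calc ((Finset.Icc 1 (w.length + 1 - u.length)).filter (EmbedsAt u w)).card
      ≤ (Finset.Icc 1 (w.length + 1 - u.length)).card := Finset.card_filter_le _ _
    _ ≤ n + 1 := by rw [Nat.card_Icc, hlen]; omega

lemma BB_eq_sum_AA (u : List ℕ) (n m s : ℕ) :
    BB u n m s = ∑ j ∈ Finset.range (n+2), (j.choose s) * AA u n m j := by
  unfold BB AA
  rw [← Finset.sum_fiberwise_of_maps_to (g := fun w => eta u w) (t := Finset.range (n+2))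
    (fun w hw => Finset.mem_range.mpr
      (show eta u w < n + 2 by have := eta_le (u := u) hw; omega))
    (fun w => (eta u w).choose s)]
  apply Finset.sum_congr rfl
  intro j _
  rw [Finset.sum_congr rfl (fun w hw => by
    rw [(Finset.mem_filter.mp hw).2] : ∀ w ∈ (WFinset n m).filter (fun w => eta u w = j),
      (eta u w).choose s = j.choose s)]
  rw [Finset.sum_const, smul_eq_mul, mul_comm]

lemma powersetCard_filter {s : ℕ} (P : Finset ℕ) (pred : ℕ → Prop) [DecidablePred pred] :
    Finset.powersetCard s (P.filter pred) =
      (Finset.powersetCard s P).filter (fun S => ∀ i ∈ S, pred i) := by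
  ext S
  simp only [Finset.mem_powersetCard, Finset.mem_filter]
  constructor
  · rintro ⟨hsub, hcard⟩
    refine ⟨⟨fun x hx => (Finset.mem_filter.mp (hsub hx)).1, hcard⟩,
      fun i hi => (Finset.mem_filter.mp (hsub hi)).2⟩
  · rintro ⟨⟨hsub, hcard⟩, hall⟩
    exact ⟨fun x hx => Finset.mem_filter.mpr ⟨hsub hx, hall x hx⟩, hcard⟩

lemma BB_eq_pairs (u : List ℕ) (n m s : ℕ) :
    BB u n m s = ∑ S ∈ (Finset.Icc 1 (n + 1 - u.length)).powersetCard s,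
      ((WFinset n m).filter (fun w => ∀ i ∈ S, EmbedsAt u w i)).card := by
  unfold BB
  have step1 : ∀ w ∈ WFinset n m, (eta u w).choose s =
      ∑ S ∈ (Finset.Icc 1 (n + 1 - u.length)).powersetCard s,
        (if ∀ i ∈ S, EmbedsAt u w i then 1 else 0) := by
    intro w hw
    have hlen : w.length = n := (mem_WFinset.mp hw).2.1
    have : eta u w = ((Finset.Icc 1 (n + 1 - u.length)).filter (EmbedsAt u w)).card := by
      unfold eta; rw [hlen]
    rw [this, ← Finset.card_powersetCard, powersetCard_filter, Finset.card_filter]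
  rw [Finset.sum_congr rfl step1, Finset.sum_comm]
  apply Finset.sum_congr rfl
  intro S _
  rw [Finset.card_filter]

lemma BB_rigid {u v : List ℕ} {h : ℕ} {k : ℤ} (hrs : IsRigidShift u v h k)
    (n m s : ℕ) : BB u n m s = BB v n m s := by
  rw [BB_eq_pairs, BB_eq_pairs, hrs.2.1]
  apply Finset.sum_congr rfl
  intro S hS
  exact countS_congr hrs n m S (Finset.mem_powersetCard.mp hS).1

lemma AA_of_BB {u v : List ℕ} {n m : ℕ}
    (hb : ∀ s, BB u n m s = BB v n m s) : ∀ j, AA u n m j = AA v n m j := by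
  have hzero : ∀ (u' : List ℕ) (j : ℕ), n + 1 < j → AA u' n m j = 0 := by
    intro u' j hj
    unfold AA
    rw [Finset.card_eq_zero, Finset.filter_eq_empty_iff]
    intro w hw
    have := eta_le (u := u') hw
    omega
  have main : ∀ t j, n + 2 ≤ j + t → AA u n m j = AA v n m j := by
    intro t
    induction t with
    | zero => intro j hj; rw [hzero u j (by omega), hzero v j (by omega)]
    | succ t ih =>
      intro j hj
      by_cases hj2 : n + 2 ≤ j + t
      · exact ih j hj2
      have hjmem : j ∈ Finset.range (n+2) := Finset.mem_range.mpr (by omega)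
      have hBj := hb j
      rw [BB_eq_sum_AA, BB_eq_sum_AA] at hBj
      rw [Finset.sum_eq_sum_sdiff_singleton_add hjmem,
        Finset.sum_eq_sum_sdiff_singleton_add hjmem] at hBj
      have hdiff : ∑ j' ∈ Finset.range (n+2) \ {j}, (j'.choose j) * AA u n m j' =
          ∑ j' ∈ Finset.range (n+2) \ {j}, (j'.choose j) * AA v n m j' := by
        apply Finset.sum_congr rfl
        intro j' hj'
        rw [Finset.mem_sdiff, Finset.mem_range, Finset.mem_singleton] at hj'
        rcases lt_or_gt_of_ne hj'.2 with hlt | hgt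
        · rw [Nat.choose_eq_zero_of_lt hlt, zero_mul, zero_mul]
        · rw [ih j' (by omega)]
      rw [hdiff, Nat.choose_self, one_mul, one_mul] at hBj
      omega
  intro j
  exact main (n+2) j (by omega)

lemma AA_eq_ncard (u : List ℕ) (n m j : ℕ) :
    {w : List ℕ | IsWord w ∧ w.length = n ∧ w.sum = m ∧ eta u w = j}.ncard = AA u n m j :=
  ncard_eq_card_WFilter n m (fun w => eta u w = j)

lemma rigid_swe {u v : List ℕ} {h : ℕ} {k : ℤ} (hrs : IsRigidShift u v h k) :
    StronglyWilfEquiv u v := by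
  intro n m j
  rw [AA_eq_ncard, AA_eq_ncard]
  exact AA_of_BB (fun s => BB_rigid hrs n m s) j

lemma reverse_swe (u : List ℕ) : StronglyWilfEquiv u u.reverse := by
  intro n m j
  have himg : {w : List ℕ | IsWord w ∧ w.length = n ∧ w.sum = m ∧ eta u.reverse w = j} =
      List.reverse '' {w : List ℕ | IsWord w ∧ w.length = n ∧ w.sum = m ∧ eta u w = j} := by
    ext w'
    simp only [Set.mem_image, Set.mem_setOf_eq]
    constructor
    · rintro ⟨h1, h2, h3, h4⟩
      refine ⟨w'.reverse, ⟨fun x hx => h1 x (List.mem_reverse.mp hx),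
        by simpa using h2, by rw [List.sum_reverse]; exact h3, ?_⟩, List.reverse_reverse w'⟩
      rw [eta_reverse u w'.reverse, List.reverse_reverse]
      exact h4
    · rintro ⟨w, ⟨h1, h2, h3, h4⟩, rfl⟩
      refine ⟨fun x hx => h1 x (List.mem_reverse.mp hx),
        by simpa using h2, by rw [List.sum_reverse]; exact h3, ?_⟩
      rw [← eta_reverse u w]
      exact h4
  rw [himg, Set.ncard_image_of_injective _ List.reverse_injective]


/-- Any two shift equivalent words are strongly Wilf equivalent. -/
theorem shiftEquiv_implies_stronglyWilfEquiv (u v : List ℕ)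
    (hu : IsWord u) (hv : IsWord v) (huv : ShiftEquiv u v) :
    StronglyWilfEquiv u v := by
  clear hu hv
  induction huv with
  | rel a b hab =>
    rcases hab with rfl | ⟨h, k, hrs⟩
    · exact reverse_swe a
    · exact rigid_swe hrs
  | refl a => intro n m j; rfl
  | symm a b _ ih => intro n m j; exact (ih n m j).symm
  | trans a b c _ _ ih1 ih2 => intro n m j; exact (ih1 n m j).trans (ih2 n m j)
end

section
/- Let h be a natural number, let J be a nonempty finite index set, and let a, b : J → ℕ be functions such that for every j ∈ J, if a_j < h then b_j ≤ h. Then max_{j∈J} ( min(h, a_j) + max(0, b_j − h) ) = min( h, max_{j∈J} a_j ) + max( 0, (max_{j∈J} b_j) − h ). -/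
/-- For a nonempty finite index set with
`a_j < h → b_j ≤ h`, the maximum of `min(h, a_j) + max(0, b_j - h)` splits as
`min(h, max a_j) + max(0, (max b_j) - h)` (truncated subtraction on ℕ). -/
theorem sup_min_add_tsub (h : ℕ) {J : Type*} (s : Finset J) (hs : s.Nonempty)
    (a b : J → ℕ) (hab : ∀ j ∈ s, a j < h → b j ≤ h) :
    s.sup' hs (fun j => min h (a j) + (b j - h)) =
      min h (s.sup' hs a) + (s.sup' hs b - h) := by
  obtain ⟨ja, hja, hA⟩ := Finset.exists_mem_eq_sup' hs a
  obtain ⟨jb, hjb, hB⟩ := Finset.exists_mem_eq_sup' hs b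
  apply le_antisymm
  · apply Finset.sup'_le
    intro j hj
    exact add_le_add (min_le_min le_rfl (Finset.le_sup' a hj))
      (Nat.sub_le_sub_right (Finset.le_sup' b hj) h)
  · by_cases hBh : s.sup' hs b ≤ h
    · rw [Nat.sub_eq_zero_of_le hBh, add_zero]
      calc min h (s.sup' hs a) = min h (a ja) := by rw [hA]
        _ ≤ min h (a ja) + (b ja - h) := Nat.le_add_right _ _
        _ ≤ _ := Finset.le_sup' (fun j => min h (a j) + (b j - h)) hja
    · push_neg at hBh
      have hab' : h ≤ a jb := by
        by_contra hc; push_neg at hc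
        exact absurd (hab jb hjb hc) (by omega)
      have hAh : h ≤ s.sup' hs a := le_trans hab' (Finset.le_sup' a hjb)
      calc min h (s.sup' hs a) + (s.sup' hs b - h)
          = h + (b jb - h) := by rw [hB, min_eq_left hAh]
        _ = min h (a jb) + (b jb - h) := by rw [min_eq_left hab']
        _ ≤ _ := Finset.le_sup' (fun j => min h (a j) + (b j - h)) hjb
end

section
/- Let v = v_1⋯v_L be the rigid shift of the word u = u_1⋯u_L at height h ≥ 1 by the integer k, with the convention u_t = v_t = 0 for t ∉ {1,…,L}. Let m ≥ 1 and let i_1, …, i_m be integers. Define c_n = max_{1≤j≤m} u_{n−i_j+1} and d_n = max_{1≤j≤m} v_{n−i_j+1} for every integer n (and c_n = 0, d_n = 0 where all arguments lie outside {1,…,L}). Then for every integer n, d_n = min(h, c_n) + max(0, c_{n−k} − h). -/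

lemma letter_eq_zero' (w : List ℕ) (t : ℤ) (ht : t < 1 ∨ (w.length : ℤ) < t) :
    letter w t = 0 := by
  unfold letter
  split
  · apply List.getD_eq_default
    omega
  · rfl

lemma rigid_pointwise (u v : List ℕ) (h : ℕ) (k : ℤ) (hs : IsRigidShift u v h k) :
    ∀ t : ℤ, letter v t = min h (letter u t) + (letter u (t - k) - h) := by
  obtain ⟨hh, hlen, hmove, hval⟩ := hs
  intro t
  by_cases h1 : 1 ≤ t ∧ t ≤ (v.length : ℤ)
  · exact hval t h1.1 h1.2
  · have hv0 : letter v t = 0 := letter_eq_zero' v t (by omega)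
    have hu0 : letter u t = 0 := letter_eq_zero' u t (by rw [← hlen]; omega)
    have hle : letter u (t - k) ≤ h := by
      by_contra hc
      push_neg at hc
      obtain ⟨h1', h2', _⟩ := hmove (t - k) hc
      rw [← hlen] at h2'
      omega
    rw [hv0, hu0]
    omega

/-- If `v` is the rigid shift of `u` at height `h ≥ 1` by `k`,
and `c_n = max_j u_{n-i_j+1}`, `d_n = max_j v_{n-i_j+1}`, then
`d_n = min(h, c_n) + max(0, c_{n-k} - h)` for every integer `n`. -/
theorem rigidShift_cluster_letter (u v : List ℕ) (h : ℕ) (k : ℤ)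
    (hu : IsWord u) (hv : IsWord v) (hshift : IsRigidShift u v h k)
    (m : ℕ) (hm : 1 ≤ m) (i : ℕ → ℤ) :
    ∀ n : ℤ,
      (Finset.Icc 1 m).sup (fun j => letter v (n - i j + 1)) =
        min h ((Finset.Icc 1 m).sup (fun j => letter u (n - i j + 1))) +
          ((Finset.Icc 1 m).sup (fun j => letter u (n - k - i j + 1)) - h) := by
  intro n
  have hpt := rigid_pointwise u v h k hshift
  have hne : (Finset.Icc 1 m).Nonempty := ⟨1, by simp [hm]⟩
  set S := Finset.Icc 1 m with hS
  have harg : ∀ j : ℕ, n - k - i j + 1 = n - i j + 1 - k := fun j => by ring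
  have hrw : S.sup (fun j => letter v (n - i j + 1)) =
      S.sup (fun j => min h (letter u (n - i j + 1)) + (letter u (n - i j + 1 - k) - h)) := by
    apply Finset.sup_congr rfl
    intro j _
    rw [hpt]
  rw [hrw]
  apply le_antisymm
  · apply Finset.sup_le
    intro j hj
    have h1 : letter u (n - i j + 1) ≤ S.sup (fun j => letter u (n - i j + 1)) :=
      Finset.le_sup (f := fun j => letter u (n - i j + 1)) hj
    have h2 : letter u (n - i j + 1 - k) ≤ S.sup (fun j => letter u (n - k - i j + 1)) := by
      rw [← harg j]
      exact Finset.le_sup (f := fun j => letter u (n - k - i j + 1)) hj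
    omega
  · obtain ⟨j1, hj1, e1⟩ := Finset.exists_mem_eq_sup S hne (fun j => letter u (n - i j + 1))
    obtain ⟨j2, hj2, e2⟩ := Finset.exists_mem_eq_sup S hne (fun j => letter u (n - k - i j + 1))
    by_cases hc : letter u (n - k - i j2 + 1) ≤ h
    · have h1 : min h (letter u (n - i j1 + 1)) + (letter u (n - i j1 + 1 - k) - h) ≤
          S.sup (fun j => min h (letter u (n - i j + 1)) + (letter u (n - i j + 1 - k) - h)) :=
        Finset.le_sup (f := fun j => min h (letter u (n - i j + 1)) +
          (letter u (n - i j + 1 - k) - h)) hj1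
      rw [e1, e2]
      omega
    · push_neg at hc
      obtain ⟨_, _, hge⟩ := hshift.2.2.1 (n - k - i j2 + 1) hc
      have hargk : n - k - i j2 + 1 + k = n - i j2 + 1 := by ring
      rw [hargk] at hge
      have h2 : min h (letter u (n - i j2 + 1)) + (letter u (n - i j2 + 1 - k) - h) ≤
          S.sup (fun j => min h (letter u (n - i j + 1)) + (letter u (n - i j + 1 - k) - h)) :=
        Finset.le_sup (f := fun j => min h (letter u (n - i j + 1)) +
          (letter u (n - i j + 1 - k) - h)) hj2
      have hbj2 : letter u (n - i j2 + 1 - k) = letter u (n - k - i j2 + 1) := by rw [← harg]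
      rw [e1, e2]
      simp only [hbj2] at h2
      omega
end

section
/- Let m and n be positive integers with n ≥ m, and let u, v, and w be (possibly empty) words all of whose letters lie in {1, …, m}. Then the concatenated words u·m·v·n·w and u·n·v·m·w (where m and n denote single letters) are strongly Wilf equivalent: for all N, M, j ∈ ℕ, the number of words z with |z| = N, ‖z‖ = M, and exactly j embeddings of u·m·v·n·w equals the number of words z with |z| = N, ‖z‖ = M, and exactly j embeddings of u·n·v·m·w. -/
namespace SWE

open Finset

/-! ### Basic reformulation of `EmbedsAt` with 0-based `getD` indexing -/

lemma letter_coe (x : List ℕ) (j : ℕ) (hj : 1 ≤ j) :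
    letter x (j : ℤ) = x.getD (j - 1) 0 := by
  unfold letter
  rw [if_pos (by exact_mod_cast hj)]
  congr 1
  omega

lemma letter_combo (z : List ℕ) (i j : ℕ) (hi : 1 ≤ i) (hj : 1 ≤ j) :
    letter z ((i : ℤ) + (j : ℤ) - 1) = z.getD (i - 1 + (j - 1)) 0 := by
  have h : (i : ℤ) + (j : ℤ) - 1 = ((i + j - 1 : ℕ) : ℤ) := by omega
  rw [h, letter_coe _ _ (by omega)]
  congr 1
  omega

lemma embedsAt_iff (x z : List ℕ) (i : ℕ) :
    EmbedsAt x z i ↔ 1 ≤ i ∧ i + x.length ≤ z.length + 1 ∧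
      ∀ t < x.length, x.getD t 0 ≤ z.getD (i - 1 + t) 0 := by
  constructor
  · rintro ⟨h1, h2, h3⟩
    refine ⟨h1, h2, fun t ht => ?_⟩
    have h := h3 (t + 1) (Finset.mem_Icc.mpr ⟨by omega, by omega⟩)
    rw [letter_coe x (t + 1) (by omega), letter_combo z i (t + 1) h1 (by omega)] at h
    simpa using h
  · rintro ⟨h1, h2, h3⟩
    refine ⟨h1, h2, fun j hj => ?_⟩
    rw [Finset.mem_Icc] at hj
    have h := h3 (j - 1) (by omega)
    rw [letter_coe x j (by omega), letter_combo z i j h1 (by omega)]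
    exact h

lemma list_eq_of_getD {l₁ l₂ : List ℕ} (hlen : l₁.length = l₂.length)
    (h : ∀ k < l₁.length, l₁.getD k 0 = l₂.getD k 0) : l₁ = l₂ := by
  apply List.ext_getElem hlen
  intro k h1 h2
  have hk := h k h1
  rwa [List.getD_eq_getElem _ _ h1, List.getD_eq_getElem _ _ h2] at hk

lemma getD_le_of_forall {l : List ℕ} {m : ℕ} (h : ∀ x ∈ l, x ≤ m) (t : ℕ) :
    l.getD t 0 ≤ m := by
  rcases lt_or_ge t l.length with h' | h'
  · rw [List.getD_eq_getElem _ _ h']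
    exact h _ (List.getElem_mem h')
  · rw [List.getD_eq_default _ _ h']
    exact Nat.zero_le m

lemma sum_getD (z : List ℕ) : z.sum = ∑ q ∈ Finset.range z.length, z.getD q 0 := by
  induction z using List.reverseRecOn with
  | nil => simp
  | append_singleton xs x ih =>
    simp only [List.sum_append, List.length_append, List.length_singleton,
      Finset.sum_range_succ, List.sum_cons, List.sum_nil, ih]
    congr 1
    · apply Finset.sum_congr rfl
      intro q hq
      rw [List.getD_append _ _ _ _ (Finset.mem_range.mp hq)]
    · rw [List.getD_append_right _ _ _ _ (le_refl _)]
      simp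

/-! ### The pattern `u ++ [x] ++ v ++ [y] ++ w` and its letters -/

def Pat (u v w : List ℕ) (x y : ℕ) : List ℕ := u ++ [x] ++ v ++ [y] ++ w

variable (u v w : List ℕ)

lemma pat_length (x y : ℕ) :
    (Pat u v w x y).length = u.length + v.length + w.length + 2 := by
  simp [Pat]
  omega

lemma pat_getD_low (x y t : ℕ) (ht : t < u.length) :
    (Pat u v w x y).getD t 0 = u.getD t 0 := by
  unfold Pat
  rw [List.getD_append _ _ _ _ (by simp; omega), List.getD_append _ _ _ _ (by simp; omega),
    List.getD_append _ _ _ _ (by simp; omega), List.getD_append _ _ _ _ ht]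

lemma pat_getD_s1 (x y : ℕ) : (Pat u v w x y).getD u.length 0 = x := by
  unfold Pat
  rw [List.getD_append _ _ _ _ (by simp), List.getD_append _ _ _ _ (by simp),
    List.getD_append _ _ _ _ (by simp), List.getD_append_right _ _ _ _ (le_refl _)]
  simp

lemma pat_getD_mid (x y t : ℕ) (ht1 : u.length < t) (ht2 : t < u.length + v.length + 1) :
    (Pat u v w x y).getD t 0 = v.getD (t - u.length - 1) 0 := by
  unfold Pat
  rw [List.getD_append _ _ _ _ (by simp; omega), List.getD_append _ _ _ _ (by simp; omega),
    List.getD_append_right _ _ _ _ (by simp; omega)]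
  have h : t - (u ++ [x]).length = t - u.length - 1 := by simp; omega
  rw [h]

lemma pat_getD_s2 (x y : ℕ) :
    (Pat u v w x y).getD (u.length + v.length + 1) 0 = y := by
  unfold Pat
  rw [List.getD_append _ _ _ _ (by simp; omega),
    List.getD_append_right _ _ _ _ (by simp; omega)]
  have h : u.length + v.length + 1 - (u ++ [x] ++ v).length = 0 := by simp
  rw [h]
  simp

lemma pat_getD_high (x y t : ℕ) (ht : u.length + v.length + 1 < t) :
    (Pat u v w x y).getD t 0 = w.getD (t - u.length - v.length - 2) 0 := by
  unfold Pat
  rw [List.getD_append_right _ _ _ _ (by simp; omega)]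
  have h : t - (u ++ [x] ++ v ++ [y]).length = t - u.length - v.length - 2 := by simp; omega
  rw [h]

variable {m : ℕ}

lemma pat_getD_le {x y : ℕ} (hx : x ≤ m) (hy : y ≤ m)
    (hu : ∀ q ∈ u, q ≤ m) (hv : ∀ q ∈ v, q ≤ m) (hw : ∀ q ∈ w, q ≤ m) (t : ℕ) :
    (Pat u v w x y).getD t 0 ≤ m := by
  by_cases h1 : t < u.length
  · rw [pat_getD_low u v w x y t h1]; exact getD_le_of_forall hu t
  by_cases h2 : t = u.length
  · subst h2; rw [pat_getD_s1]; exact hx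
  by_cases h3 : t < u.length + v.length + 1
  · rw [pat_getD_mid u v w x y t (by omega) h3]; exact getD_le_of_forall hv _
  by_cases h4 : t = u.length + v.length + 1
  · subst h4; rw [pat_getD_s2]; exact hy
  · rw [pat_getD_high u v w x y t (by omega)]; exact getD_le_of_forall hw _

lemma pat_getD_congr (x y x' y' t : ℕ) (h1 : t ≠ u.length)
    (h2 : t ≠ u.length + v.length + 1) :
    (Pat u v w x y).getD t 0 = (Pat u v w x' y').getD t 0 := by
  by_cases c1 : t < u.length
  · rw [pat_getD_low u v w x y t c1, pat_getD_low u v w x' y' t c1]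
  by_cases c2 : t < u.length + v.length + 1
  · rw [pat_getD_mid u v w x y t (by omega) c2, pat_getD_mid u v w x' y' t (by omega) c2]
  · rw [pat_getD_high u v w x y t (by omega), pat_getD_high u v w x' y' t (by omega)]

lemma emb_pat {x y : ℕ} (hx : m ≤ x) (hy : m ≤ y) (z : List ℕ) (i : ℕ) :
    EmbedsAt (Pat u v w x y) z i ↔ EmbedsAt (Pat u v w m m) z i ∧
      x ≤ z.getD (i - 1 + u.length) 0 ∧
      y ≤ z.getD (i - 1 + (u.length + v.length + 1)) 0 := by
  rw [embedsAt_iff, embedsAt_iff]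
  simp only [pat_length]
  constructor
  · rintro ⟨h1, h2, h3⟩
    refine ⟨⟨h1, h2, fun t ht => ?_⟩, ?_, ?_⟩
    · by_cases e1 : t = u.length
      · subst e1
        have h := h3 u.length ht
        rw [pat_getD_s1] at h
        rw [pat_getD_s1]
        omega
      by_cases e2 : t = u.length + v.length + 1
      · subst e2
        have h := h3 _ ht
        rw [pat_getD_s2] at h
        rw [pat_getD_s2]
        omega
      · rw [pat_getD_congr u v w m m x y t e1 e2]
        exact h3 t ht
    · have h := h3 u.length (by omega)
      rwa [pat_getD_s1] at h
    · have h := h3 (u.length + v.length + 1) (by omega)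
      rwa [pat_getD_s2] at h
  · rintro ⟨⟨h1, h2, h3⟩, hX, hY⟩
    refine ⟨h1, h2, fun t ht => ?_⟩
    by_cases e1 : t = u.length
    · subst e1; rw [pat_getD_s1]; exact hX
    by_cases e2 : t = u.length + v.length + 1
    · subst e2; rw [pat_getD_s2]; exact hY
    · rw [pat_getD_congr u v w x y m m t e1 e2]
      exact h3 t ht

/-! ### Truncation at height `m` -/

def truncW (m : ℕ) (z : List ℕ) : List ℕ := z.map fun q => min q m

lemma truncW_length (m : ℕ) (z : List ℕ) : (truncW m z).length = z.length := by
  simp [truncW]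

lemma truncW_getD (m : ℕ) (z : List ℕ) (k : ℕ) :
    (truncW m z).getD k 0 = min (z.getD k 0) m := by
  rcases lt_or_ge k z.length with h | h
  · rw [List.getD_eq_getElem _ _ (by rw [truncW_length]; exact h),
      List.getD_eq_getElem _ _ h]
    simp [truncW]
  · rw [List.getD_eq_default _ _ (by rw [truncW_length]; exact h),
      List.getD_eq_default _ _ h]
    simp

lemma emb_trunc (hu : ∀ q ∈ u, q ≤ m) (hv : ∀ q ∈ v, q ≤ m) (hw : ∀ q ∈ w, q ≤ m)
    (z : List ℕ) (i : ℕ) :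
    EmbedsAt (Pat u v w m m) (truncW m z) i ↔ EmbedsAt (Pat u v w m m) z i := by
  rw [embedsAt_iff, embedsAt_iff, truncW_length]
  constructor <;> rintro ⟨h1, h2, h3⟩ <;> refine ⟨h1, h2, fun t ht => ?_⟩
  · have h := h3 t ht
    rw [truncW_getD] at h
    omega
  · have h := h3 t ht
    have hle := pat_getD_le u v w (le_refl m) (le_refl m) hu hv hw t
    rw [truncW_getD]
    omega

/-! ### Piecewise permutations from equivalences of finsets -/

def pwMap (s t S : Finset ℕ) (e : {x // x ∈ s} ≃ {x // x ∈ t})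
    (f : {x // x ∈ S \ s} ≃ {x // x ∈ S \ t}) (p : ℕ) : ℕ :=
  if hp : p ∈ s then (e ⟨p, hp⟩ : ℕ)
  else if hp : p ∈ S \ s then (f ⟨p, hp⟩ : ℕ) else p

variable {s t S : Finset ℕ} {e : {x // x ∈ s} ≃ {x // x ∈ t}}
  {f : {x // x ∈ S \ s} ≃ {x // x ∈ S \ t}}

lemma pwMap_mem_t {p : ℕ} (hp : p ∈ s) : pwMap s t S e f p ∈ t := by
  simp only [pwMap, dif_pos hp]
  exact (e ⟨p, hp⟩).2

lemma pwMap_notMem (hs : s ⊆ S) {p : ℕ} (hp : p ∉ S) : pwMap s t S e f p = p := by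
  simp only [pwMap, dif_neg (fun h => hp (hs h)),
    dif_neg (fun h => hp (Finset.mem_sdiff.mp h).1)]

lemma pwMap_mem_S (hs : s ⊆ S) (ht : t ⊆ S) {p : ℕ} (hp : p ∈ S) :
    pwMap s t S e f p ∈ S := by
  by_cases h : p ∈ s
  · exact ht (pwMap_mem_t h)
  · have hd : p ∈ S \ s := Finset.mem_sdiff.mpr ⟨hp, h⟩
    simp only [pwMap, dif_neg h, dif_pos hd]
    exact (Finset.mem_sdiff.mp (f ⟨p, hd⟩).2).1

lemma pwMap_leftInv (hs : s ⊆ S) (ht : t ⊆ S) (p : ℕ) :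
    pwMap t s S e.symm f.symm (pwMap s t S e f p) = p := by
  by_cases h1 : p ∈ s
  · have hval : pwMap s t S e f p = (e ⟨p, h1⟩ : ℕ) := by simp only [pwMap, dif_pos h1]
    rw [hval]
    have h2 : ((e ⟨p, h1⟩ : {x // x ∈ t}) : ℕ) ∈ t := (e ⟨p, h1⟩).2
    simp only [pwMap, dif_pos h2]
    have h3 : (⟨((e ⟨p, h1⟩ : {x // x ∈ t}) : ℕ), h2⟩ : {x // x ∈ t}) = e ⟨p, h1⟩ :=
      Subtype.ext rfl
    rw [h3, Equiv.symm_apply_apply]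
  · by_cases h2 : p ∈ S \ s
    · have hval : pwMap s t S e f p = (f ⟨p, h2⟩ : ℕ) := by
        simp only [pwMap, dif_neg h1, dif_pos h2]
      rw [hval]
      have h3 : ((f ⟨p, h2⟩ : {x // x ∈ S \ t}) : ℕ) ∈ S \ t := (f ⟨p, h2⟩).2
      have h4 : ((f ⟨p, h2⟩ : {x // x ∈ S \ t}) : ℕ) ∉ t := (Finset.mem_sdiff.mp h3).2
      simp only [pwMap, dif_neg h4, dif_pos h3]
      have h5 : (⟨((f ⟨p, h2⟩ : {x // x ∈ S \ t}) : ℕ), h3⟩ : {x // x ∈ S \ t}) = f ⟨p, h2⟩ :=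
        Subtype.ext rfl
      rw [h5, Equiv.symm_apply_apply]
    · have hp : p ∉ S := fun hS => h2 (Finset.mem_sdiff.mpr ⟨hS, h1⟩)
      rw [pwMap_notMem hs hp]
      exact pwMap_notMem ht hp

/-! ### Position sets attached to a low word `l` -/

def lowS (m : ℕ) (l : List ℕ) : Finset ℕ :=
  (Finset.range l.length).filter fun q => m ≤ l.getD q 0

def lowG (m : ℕ) (u v w l : List ℕ) : Finset ℕ :=
  (Finset.Icc 1 (l.length + 1 - (Pat u v w m m).length)).filter (EmbedsAt (Pat u v w m m) l)

def posA (m : ℕ) (u v w l : List ℕ) : Finset ℕ :=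
  (lowG m u v w l).image fun i => i - 1 + u.length

def posB (m : ℕ) (u v w l : List ℕ) : Finset ℕ :=
  (lowG m u v w l).image fun i => i - 1 + (u.length + v.length + 1)

lemma lowG_bounds {l : List ℕ} {i : ℕ} (hi : i ∈ lowG m u v w l) :
    1 ≤ i ∧ i + (u.length + v.length + w.length + 2) ≤ l.length + 1 := by
  have h := (Finset.mem_filter.mp hi).2
  rw [embedsAt_iff, pat_length] at h
  exact ⟨h.1, h.2.1⟩

lemma lowG_m1 {l : List ℕ} {i : ℕ} (hi : i ∈ lowG m u v w l) :
    m ≤ l.getD (i - 1 + u.length) 0 := by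
  have h := (Finset.mem_filter.mp hi).2
  rw [embedsAt_iff] at h
  have ht := h.2.2 u.length (by rw [pat_length]; omega)
  rwa [pat_getD_s1] at ht

lemma lowG_m2 {l : List ℕ} {i : ℕ} (hi : i ∈ lowG m u v w l) :
    m ≤ l.getD (i - 1 + (u.length + v.length + 1)) 0 := by
  have h := (Finset.mem_filter.mp hi).2
  rw [embedsAt_iff] at h
  have ht := h.2.2 (u.length + v.length + 1) (by rw [pat_length]; omega)
  rwa [pat_getD_s2] at ht

lemma posA_subset (l : List ℕ) : posA m u v w l ⊆ lowS m l := by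
  intro p hp
  obtain ⟨i, hi, rfl⟩ := Finset.mem_image.mp hp
  have hb := lowG_bounds u v w hi
  exact Finset.mem_filter.mpr ⟨Finset.mem_range.mpr (by omega), lowG_m1 u v w hi⟩

lemma posB_subset (l : List ℕ) : posB m u v w l ⊆ lowS m l := by
  intro p hp
  obtain ⟨i, hi, rfl⟩ := Finset.mem_image.mp hp
  have hb := lowG_bounds u v w hi
  exact Finset.mem_filter.mpr ⟨Finset.mem_range.mpr (by omega), lowG_m2 u v w hi⟩

lemma card_posA (l : List ℕ) : (posA m u v w l).card = (lowG m u v w l).card := by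
  apply Finset.card_image_of_injOn
  intro i hi j hj hij
  have h1 := lowG_bounds u v w (Finset.mem_coe.mp hi)
  have h2 := lowG_bounds u v w (Finset.mem_coe.mp hj)
  dsimp only at hij
  omega

lemma card_posB (l : List ℕ) : (posB m u v w l).card = (lowG m u v w l).card := by
  apply Finset.card_image_of_injOn
  intro i hi j hj hij
  have h1 := lowG_bounds u v w (Finset.mem_coe.mp hi)
  have h2 := lowG_bounds u v w (Finset.mem_coe.mp hj)
  dsimp only at hij
  omega

noncomputable def eqBA (m : ℕ) (u v w l : List ℕ) :
    {x // x ∈ posB m u v w l} ≃ {x // x ∈ posA m u v w l} :=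
  Finset.equivOfCardEq (by rw [card_posA, card_posB])

noncomputable def eqSBA (m : ℕ) (u v w l : List ℕ) :
    {x // x ∈ lowS m l \ posB m u v w l} ≃ {x // x ∈ lowS m l \ posA m u v w l} :=
  Finset.equivOfCardEq (by
    rw [Finset.card_sdiff_of_subset (posB_subset u v w l), Finset.card_sdiff_of_subset (posA_subset u v w l),
      card_posA, card_posB])

noncomputable def sigmaF (m : ℕ) (u v w l : List ℕ) : ℕ → ℕ :=
  pwMap (posB m u v w l) (posA m u v w l) (lowS m l) (eqBA m u v w l) (eqSBA m u v w l)

noncomputable def sigmaF' (m : ℕ) (u v w l : List ℕ) : ℕ → ℕ :=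
  pwMap (posA m u v w l) (posB m u v w l) (lowS m l) (eqBA m u v w l).symm
    (eqSBA m u v w l).symm

lemma sigmaF'_sigmaF (l : List ℕ) (p : ℕ) :
    sigmaF' m u v w l (sigmaF m u v w l p) = p :=
  pwMap_leftInv (posB_subset u v w l) (posA_subset u v w l) p

lemma sigmaF_sigmaF' (l : List ℕ) (p : ℕ) :
    sigmaF m u v w l (sigmaF' m u v w l p) = p := by
  have h := pwMap_leftInv (S := lowS m l) (e := (eqBA m u v w l).symm)
    (f := (eqSBA m u v w l).symm) (posA_subset u v w l) (posB_subset u v w l) p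
  simpa only [sigmaF, sigmaF', Equiv.symm_symm] using h

lemma sigmaF_mem_S {l : List ℕ} {p : ℕ} (hp : p ∈ lowS m l) :
    sigmaF m u v w l p ∈ lowS m l :=
  pwMap_mem_S (posB_subset u v w l) (posA_subset u v w l) hp

lemma sigmaF'_mem_S {l : List ℕ} {p : ℕ} (hp : p ∈ lowS m l) :
    sigmaF' m u v w l p ∈ lowS m l :=
  pwMap_mem_S (posA_subset u v w l) (posB_subset u v w l) hp

lemma sigmaF_notMem {l : List ℕ} {p : ℕ} (hp : p ∉ lowS m l) :
    sigmaF m u v w l p = p :=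
  pwMap_notMem (posB_subset u v w l) hp

lemma sigmaF'_notMem {l : List ℕ} {p : ℕ} (hp : p ∉ lowS m l) :
    sigmaF' m u v w l p = p :=
  pwMap_notMem (posA_subset u v w l) hp

lemma sigmaF_mem_A {l : List ℕ} {p : ℕ} (hp : p ∈ posB m u v w l) :
    sigmaF m u v w l p ∈ posA m u v w l :=
  pwMap_mem_t hp

lemma sigmaF'_mem_B {l : List ℕ} {p : ℕ} (hp : p ∈ posA m u v w l) :
    sigmaF' m u v w l p ∈ posB m u v w l :=
  pwMap_mem_t hp

/-! ### The rearranging map on words -/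

def phiAux (m : ℕ) (τ : ℕ → ℕ) (z : List ℕ) : List ℕ :=
  (List.range z.length).map fun q => min (z.getD q 0) m + (z.getD (τ q) 0 - m)

lemma phiAux_length (τ : ℕ → ℕ) (z : List ℕ) : (phiAux m τ z).length = z.length := by
  simp [phiAux]

lemma phiAux_getD (τ : ℕ → ℕ) (z : List ℕ) {q : ℕ} (hq : q < z.length) :
    (phiAux m τ z).getD q 0 = min (z.getD q 0) m + (z.getD (τ q) 0 - m) := by
  rw [List.getD_eq_getElem _ _ (by rw [phiAux_length]; exact hq)]
  simp [phiAux]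

lemma mem_lowS_trunc (z : List ℕ) (q : ℕ) :
    q ∈ lowS m (truncW m z) ↔ q < z.length ∧ m ≤ z.getD q 0 := by
  simp only [lowS, Finset.mem_filter, Finset.mem_range, truncW_length, truncW_getD]
  omega

def goodPerm (m : ℕ) (l : List ℕ) (τ : ℕ → ℕ) : Prop :=
  (∀ q ∈ lowS m l, τ q ∈ lowS m l) ∧ (∀ q, q ∉ lowS m l → τ q = q)

lemma goodPerm_sigmaF (l : List ℕ) : goodPerm m l (sigmaF m u v w l) :=
  ⟨fun _ hq => sigmaF_mem_S u v w hq, fun _ hq => sigmaF_notMem u v w hq⟩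

lemma goodPerm_sigmaF' (l : List ℕ) : goodPerm m l (sigmaF' m u v w l) :=
  ⟨fun _ hq => sigmaF'_mem_S u v w hq, fun _ hq => sigmaF'_notMem u v w hq⟩

lemma goodPerm_lt {l : List ℕ} {τ : ℕ → ℕ} (h : goodPerm m l τ) {q : ℕ}
    (hq : q < l.length) : τ q < l.length := by
  by_cases hs : q ∈ lowS m l
  · have h2 := h.1 q hs
    exact Finset.mem_range.mp (Finset.mem_filter.mp h2).1
  · rw [h.2 q hs]; exact hq

lemma trunc_phiAux {z : List ℕ} {τ : ℕ → ℕ} (h : goodPerm m (truncW m z) τ) :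
    truncW m (phiAux m τ z) = truncW m z := by
  apply list_eq_of_getD
  · rw [truncW_length, phiAux_length, truncW_length]
  intro k hk
  have hk' : k < z.length := by rwa [truncW_length, phiAux_length] at hk
  rw [truncW_getD, truncW_getD, phiAux_getD τ z hk']
  by_cases hc : m < z.getD (τ k) 0
  · have htk : τ k < z.length := by
      by_contra hbig
      rw [List.getD_eq_default _ _ (by omega)] at hc
      omega
    have h1 : τ k ∈ lowS m (truncW m z) := (mem_lowS_trunc z (τ k)).mpr ⟨htk, by omega⟩
    have h2 : k ∈ lowS m (truncW m z) := by
      by_contra hk2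
      rw [h.2 k hk2] at h1
      exact hk2 h1
    have h3 : m ≤ z.getD k 0 := ((mem_lowS_trunc z k).mp h2).2
    omega
  · omega

lemma isWord_phiAux (hm : 1 ≤ m) {z : List ℕ} (hz : IsWord z) (τ : ℕ → ℕ) :
    IsWord (phiAux m τ z) := by
  intro x hx
  simp only [phiAux, List.mem_map, List.mem_range] at hx
  obtain ⟨q, hq, rfl⟩ := hx
  have h1 : 0 < z.getD q 0 := by
    rw [List.getD_eq_getElem _ _ hq]
    exact hz _ (List.getElem_mem hq)
  omega

lemma sum_phiAux {z : List ℕ} {τ τ' : ℕ → ℕ} (hτ : goodPerm m (truncW m z) τ)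
    (hτ' : goodPerm m (truncW m z) τ') (hinv1 : ∀ q, τ' (τ q) = q)
    (hinv2 : ∀ q, τ (τ' q) = q) :
    (phiAux m τ z).sum = z.sum := by
  have hlt : ∀ q < z.length, τ q < z.length := by
    intro q hq
    have h := goodPerm_lt hτ (q := q) (by rwa [truncW_length])
    rwa [truncW_length] at h
  have hlt' : ∀ q < z.length, τ' q < z.length := by
    intro q hq
    have h := goodPerm_lt hτ' (q := q) (by rwa [truncW_length])
    rwa [truncW_length] at h
  have h1 : (phiAux m τ z).sum
      = ∑ q ∈ Finset.range z.length, (min (z.getD q 0) m + (z.getD (τ q) 0 - m)) := rfl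
  rw [h1, Finset.sum_add_distrib, sum_getD z]
  have h2 : ∑ q ∈ Finset.range z.length, (z.getD (τ q) 0 - m)
      = ∑ q ∈ Finset.range z.length, (z.getD q 0 - m) := by
    apply Finset.sum_nbij' τ τ'
    · intro a ha; exact Finset.mem_range.mpr (hlt a (Finset.mem_range.mp ha))
    · intro a ha; exact Finset.mem_range.mpr (hlt' a (Finset.mem_range.mp ha))
    · intro a _; exact hinv1 a
    · intro a _; exact hinv2 a
    · intro a _; rfl
  rw [h2, ← Finset.sum_add_distrib]
  apply Finset.sum_congr rfl
  intro q _
  omega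

lemma phiAux_inv {z : List ℕ} {τ τ' : ℕ → ℕ} (hτ : goodPerm m (truncW m z) τ)
    (hτ' : goodPerm m (truncW m z) τ') (hinv : ∀ q, τ (τ' q) = q) :
    phiAux m τ' (phiAux m τ z) = z := by
  apply list_eq_of_getD
  · rw [phiAux_length, phiAux_length]
  intro k hk
  have hk' : k < z.length := by rwa [phiAux_length, phiAux_length] at hk
  have hkp : k < (phiAux m τ z).length := by rwa [phiAux_length]
  rw [phiAux_getD _ _ hkp]
  have htr := trunc_phiAux hτ
  have hmin : min ((phiAux m τ z).getD k 0) m = min (z.getD k 0) m := by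
    have h := congrArg (fun L => L.getD k 0) htr
    simpa only [truncW_getD] using h
  rw [hmin]
  have hτ'k : τ' k < z.length := by
    have h := goodPerm_lt hτ' (q := k) (by rwa [truncW_length])
    rwa [truncW_length] at h
  rw [phiAux_getD _ _ hτ'k, hinv k]
  by_cases hc : m < z.getD k 0
  · have h1 : k ∈ lowS m (truncW m z) := (mem_lowS_trunc z k).mpr ⟨hk', by omega⟩
    have h2 : τ' k ∈ lowS m (truncW m z) := hτ'.1 k h1
    have h3 : m ≤ z.getD (τ' k) 0 := ((mem_lowS_trunc z (τ' k)).mp h2).2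
    omega
  · omega

/-! ### Eta computations -/

variable {n : ℕ}

lemma eta_pat {x y : ℕ} (hx : m ≤ x) (hy : m ≤ y) (hu : ∀ q ∈ u, q ≤ m)
    (hv : ∀ q ∈ v, q ≤ m) (hw : ∀ q ∈ w, q ≤ m) (z : List ℕ) :
    eta (Pat u v w x y) z = ((lowG m u v w (truncW m z)).filter fun i =>
      x ≤ z.getD (i - 1 + u.length) 0 ∧
      y ≤ z.getD (i - 1 + (u.length + v.length + 1)) 0).card := by
  unfold eta lowG
  rw [Finset.filter_filter]
  simp only [pat_length, truncW_length]
  congr 1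
  apply Finset.filter_congr
  intro i _
  rw [emb_pat u v w hx hy, emb_trunc u v w hu hv hw]

lemma eta_mn (hmn : m ≤ n) (hu : ∀ q ∈ u, q ≤ m) (hv : ∀ q ∈ v, q ≤ m)
    (hw : ∀ q ∈ w, q ≤ m) (z : List ℕ) :
    eta (Pat u v w m n) z = ((lowG m u v w (truncW m z)).filter fun i =>
      n ≤ z.getD (i - 1 + (u.length + v.length + 1)) 0).card := by
  rw [eta_pat u v w le_rfl hmn hu hv hw z]
  congr 1
  apply Finset.filter_congr
  intro i hi
  have h1 := lowG_m1 u v w hi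
  rw [truncW_getD] at h1
  constructor
  · rintro ⟨_, h⟩; exact h
  · intro h; exact ⟨by omega, h⟩

lemma eta_nm (hmn : m ≤ n) (hu : ∀ q ∈ u, q ≤ m) (hv : ∀ q ∈ v, q ≤ m)
    (hw : ∀ q ∈ w, q ≤ m) (z : List ℕ) :
    eta (Pat u v w n m) z = ((lowG m u v w (truncW m z)).filter fun i =>
      n ≤ z.getD (i - 1 + u.length) 0).card := by
  rw [eta_pat u v w hmn le_rfl hu hv hw z]
  congr 1
  apply Finset.filter_congr
  intro i hi
  have h1 := lowG_m2 u v w hi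
  rw [truncW_getD] at h1
  constructor
  · rintro ⟨h, _⟩; exact h
  · intro h; exact ⟨h, by omega⟩

/-! ### The two full maps and the eta transfer -/

noncomputable def phiW (m : ℕ) (u v w z : List ℕ) : List ℕ :=
  phiAux m (sigmaF' m u v w (truncW m z)) z

noncomputable def psiW (m : ℕ) (u v w z : List ℕ) : List ℕ :=
  phiAux m (sigmaF m u v w (truncW m z)) z

lemma trunc_phiW (z : List ℕ) : truncW m (phiW m u v w z) = truncW m z :=
  trunc_phiAux (goodPerm_sigmaF' u v w (truncW m z))

lemma trunc_psiW (z : List ℕ) : truncW m (psiW m u v w z) = truncW m z :=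
  trunc_phiAux (goodPerm_sigmaF u v w (truncW m z))

lemma psiW_phiW (z : List ℕ) : psiW m u v w (phiW m u v w z) = z := by
  unfold psiW
  rw [trunc_phiW u v w z]
  exact phiAux_inv (goodPerm_sigmaF' u v w (truncW m z))
    (goodPerm_sigmaF u v w (truncW m z)) (sigmaF'_sigmaF u v w (truncW m z))

lemma phiW_psiW (z : List ℕ) : phiW m u v w (psiW m u v w z) = z := by
  unfold phiW
  rw [trunc_psiW u v w z]
  exact phiAux_inv (goodPerm_sigmaF u v w (truncW m z))
    (goodPerm_sigmaF' u v w (truncW m z)) (sigmaF_sigmaF' u v w (truncW m z))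

lemma eta_phiW (hmn : m ≤ n) (hu : ∀ q ∈ u, q ≤ m) (hv : ∀ q ∈ v, q ≤ m)
    (hw : ∀ q ∈ w, q ≤ m) (z : List ℕ) :
    eta (Pat u v w n m) (phiW m u v w z) = eta (Pat u v w m n) z := by
  rw [eta_nm u v w hmn hu hv hw, eta_mn u v w hmn hu hv hw, trunc_phiW u v w z]
  set l := truncW m z with hldef
  -- rewrite the entries of `phiW` at the positions in `posA`
  have hstep : ∀ i ∈ lowG m u v w l,
      (phiW m u v w z).getD (i - 1 + u.length) 0
        = z.getD (sigmaF' m u v w l (i - 1 + u.length)) 0 := by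
    intro i hi
    have hpA : i - 1 + u.length ∈ posA m u v w l :=
      Finset.mem_image.mpr ⟨i, hi, rfl⟩
    have hpS := posA_subset u v w l hpA
    have h1 := (mem_lowS_trunc z (i - 1 + u.length)).mp hpS
    have hB : sigmaF' m u v w l (i - 1 + u.length) ∈ posB m u v w l :=
      sigmaF'_mem_B u v w hpA
    have h2 := (mem_lowS_trunc z _).mp (posB_subset u v w l hB)
    unfold phiW
    rw [← hldef, phiAux_getD _ z h1.1]
    omega
  rw [Finset.filter_congr (fun i hi => by rw [hstep i hi] : ∀ i ∈ lowG m u v w l,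
    (n ≤ (phiW m u v w z).getD (i - 1 + u.length) 0)
      ↔ (n ≤ z.getD (sigmaF' m u v w l (i - 1 + u.length)) 0))]
  -- now a bijection between the two filtered sets
  apply Finset.card_bij'
    (i := fun i _ => sigmaF' m u v w l (i - 1 + u.length) - (u.length + v.length + 1) + 1)
    (j := fun i _ => sigmaF m u v w l (i - 1 + (u.length + v.length + 1)) - u.length + 1)
  · intro i hi
    have hmem := Finset.mem_filter.mp hi
    have hb := lowG_bounds u v w hmem.1
    have hpA : i - 1 + u.length ∈ posA m u v w l := Finset.mem_image.mpr ⟨i, hmem.1, rfl⟩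
    have hB : sigmaF' m u v w l (i - 1 + u.length) ∈ posB m u v w l :=
      sigmaF'_mem_B u v w hpA
    obtain ⟨i2, hi2, hEq⟩ := Finset.mem_image.mp hB
    have hb2 := lowG_bounds u v w hi2
    have hF : sigmaF' m u v w l (i - 1 + u.length) - (u.length + v.length + 1) + 1 = i2 := by
      omega
    rw [hF]
    refine Finset.mem_filter.mpr ⟨hi2, ?_⟩
    rw [show i2 - 1 + (u.length + v.length + 1) = sigmaF' m u v w l (i - 1 + u.length) by omega]
    exact hmem.2
  · intro i hi
    have hmem := Finset.mem_filter.mp hi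
    have hb := lowG_bounds u v w hmem.1
    have hpB : i - 1 + (u.length + v.length + 1) ∈ posB m u v w l :=
      Finset.mem_image.mpr ⟨i, hmem.1, rfl⟩
    have hA : sigmaF m u v w l (i - 1 + (u.length + v.length + 1)) ∈ posA m u v w l :=
      sigmaF_mem_A u v w hpB
    obtain ⟨i2, hi2, hEq⟩ := Finset.mem_image.mp hA
    have hb2 := lowG_bounds u v w hi2
    have hF : sigmaF m u v w l (i - 1 + (u.length + v.length + 1)) - u.length + 1 = i2 := by
      omega
    rw [hF]
    refine Finset.mem_filter.mpr ⟨hi2, ?_⟩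
    rw [show i2 - 1 + u.length = sigmaF m u v w l (i - 1 + (u.length + v.length + 1)) by omega,
      sigmaF'_sigmaF u v w l]
    exact hmem.2
  · intro i hi
    have hmem := Finset.mem_filter.mp hi
    have hb := lowG_bounds u v w hmem.1
    have hpA : i - 1 + u.length ∈ posA m u v w l := Finset.mem_image.mpr ⟨i, hmem.1, rfl⟩
    have hB : sigmaF' m u v w l (i - 1 + u.length) ∈ posB m u v w l :=
      sigmaF'_mem_B u v w hpA
    obtain ⟨i2, hi2, hEq⟩ := Finset.mem_image.mp hB
    have hb2 := lowG_bounds u v w hi2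
    have hF : sigmaF' m u v w l (i - 1 + u.length) - (u.length + v.length + 1) + 1 = i2 := by
      omega
    rw [hF, show i2 - 1 + (u.length + v.length + 1) = sigmaF' m u v w l (i - 1 + u.length) by
      omega, sigmaF_sigmaF' u v w l]
    omega
  · intro i hi
    have hmem := Finset.mem_filter.mp hi
    have hb := lowG_bounds u v w hmem.1
    have hpB : i - 1 + (u.length + v.length + 1) ∈ posB m u v w l :=
      Finset.mem_image.mpr ⟨i, hmem.1, rfl⟩
    have hA : sigmaF m u v w l (i - 1 + (u.length + v.length + 1)) ∈ posA m u v w l :=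
      sigmaF_mem_A u v w hpB
    obtain ⟨i2, hi2, hEq⟩ := Finset.mem_image.mp hA
    have hb2 := lowG_bounds u v w hi2
    have hF : sigmaF m u v w l (i - 1 + (u.length + v.length + 1)) - u.length + 1 = i2 := by
      omega
    rw [hF, show i2 - 1 + u.length = sigmaF m u v w l (i - 1 + (u.length + v.length + 1)) by
      omega, sigmaF'_sigmaF u v w l]
    omega

lemma phiW_length (z : List ℕ) : (phiW m u v w z).length = z.length :=
  phiAux_length _ z

lemma psiW_length (z : List ℕ) : (psiW m u v w z).length = z.length :=
  phiAux_length _ z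

lemma phiW_sum (z : List ℕ) : (phiW m u v w z).sum = z.sum :=
  sum_phiAux (goodPerm_sigmaF' u v w (truncW m z)) (goodPerm_sigmaF u v w (truncW m z))
    (sigmaF_sigmaF' u v w (truncW m z)) (sigmaF'_sigmaF u v w (truncW m z))

lemma psiW_sum (z : List ℕ) : (psiW m u v w z).sum = z.sum :=
  sum_phiAux (goodPerm_sigmaF u v w (truncW m z)) (goodPerm_sigmaF' u v w (truncW m z))
    (sigmaF'_sigmaF u v w (truncW m z)) (sigmaF_sigmaF' u v w (truncW m z))

lemma phiW_isWord (hm : 1 ≤ m) {z : List ℕ} (hz : IsWord z) : IsWord (phiW m u v w z) :=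
  isWord_phiAux hm hz _

lemma psiW_isWord (hm : 1 ≤ m) {z : List ℕ} (hz : IsWord z) : IsWord (psiW m u v w z) :=
  isWord_phiAux hm hz _

end SWE

/-- For `n ≥ m ≥ 1` and words `u, v, w` with letters in
`{1, …, m}`, the words `u·m·v·n·w` and `u·n·v·m·w` are strongly Wilf
equivalent. -/
theorem umvnw_stronglyWilfEquiv_unvmw (m n : ℕ) (hm : 1 ≤ m) (hmn : m ≤ n)
    (u v w : List ℕ)
    (hu : ∀ x ∈ u, 1 ≤ x ∧ x ≤ m) (hv : ∀ x ∈ v, 1 ≤ x ∧ x ≤ m)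
    (hw : ∀ x ∈ w, 1 ≤ x ∧ x ≤ m) :
    StronglyWilfEquiv (u ++ [m] ++ v ++ [n] ++ w) (u ++ [n] ++ v ++ [m] ++ w) := by
  intro N M j
  have hu' : ∀ q ∈ u, q ≤ m := fun q hq => (hu q hq).2
  have hv' : ∀ q ∈ v, q ≤ m := fun q hq => (hv q hq).2
  have hw' : ∀ q ∈ w, q ≤ m := fun q hq => (hw q hq).2
  have himg : (SWE.phiW m u v w) ''
      {z : List ℕ | IsWord z ∧ z.length = N ∧ z.sum = M ∧
        eta (u ++ [m] ++ v ++ [n] ++ w) z = j}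
      = {z : List ℕ | IsWord z ∧ z.length = N ∧ z.sum = M ∧
        eta (u ++ [n] ++ v ++ [m] ++ w) z = j} := by
    ext y
    simp only [Set.mem_image, Set.mem_setOf_eq]
    constructor
    · rintro ⟨z, ⟨h1, h2, h3, h4⟩, rfl⟩
      refine ⟨SWE.phiW_isWord u v w hm h1, ?_, ?_, ?_⟩
      · rw [SWE.phiW_length]; exact h2
      · rw [SWE.phiW_sum]; exact h3
      · have hk := SWE.eta_phiW u v w hmn hu' hv' hw' z
        rw [show (u ++ [n] ++ v ++ [m] ++ w) = SWE.Pat u v w n m from rfl, hk,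
          show SWE.Pat u v w m n = (u ++ [m] ++ v ++ [n] ++ w) from rfl]
        exact h4
    · rintro ⟨h1, h2, h3, h4⟩
      refine ⟨SWE.psiW m u v w y, ⟨SWE.psiW_isWord u v w hm h1, ?_, ?_, ?_⟩,
        SWE.phiW_psiW u v w y⟩
      · rw [SWE.psiW_length]; exact h2
      · rw [SWE.psiW_sum]; exact h3
      · have hk := SWE.eta_phiW u v w hmn hu' hv' hw' (SWE.psiW m u v w y)
        rw [SWE.phiW_psiW u v w y] at hk
        rw [show (u ++ [m] ++ v ++ [n] ++ w) = SWE.Pat u v w m n from rfl, ← hk,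
          show SWE.Pat u v w n m = (u ++ [n] ++ v ++ [m] ++ w) from rfl]
        exact h4
  rw [← himg]
  refine (Set.ncard_image_of_injOn ?_).symm
  intro z1 _ z2 _ h
  have h2 := congrArg (SWE.psiW m u v w) h
  rwa [SWE.psiW_phiW, SWE.psiW_phiW] at h2
end
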